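/- arXiv:2510.09821 — 14 statements merged into one kernel-verified Lean document; each statement's English description precedes it below -/
import Mathlib

section
/- Let β > 0 and let K be a finite index set with nonnegative reals π_k and w_k for k ∈ K. Then the map Φ : ℝ → ℝ defined by Φ(x) = x + Σ_{k∈K} (1 − exp(−β·π_k·x))·w_k is strictly monotone increasing and bijective from ℝ onto ℝ. Consequently, for every s ∈ ℝ and every β > 0 there exists a unique x̃ ∈ ℝ with Φ(x̃) = s (the counterfactual monopoly equilibrium exists and is unique regardless of β). -/
/-- Lemma 2(a): the counterfactual monopoly map
`Φ(x) = x + Σ_k (1 − exp(−β·π_k·x))·w_k` is a strictly increasing bijection of `ℝ`,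
so for every demand `s` (and every `β > 0`) a unique counterfactual monopoly
equilibrium `x̃` with `Φ(x̃) = s` exists. -/
theorem counterfactual_monopoly_exists_unique
    {K : Type*} [Fintype K] (β : ℝ) (hβ : 0 < β)
    (π w : K → ℝ) (hπ : ∀ k, 0 ≤ π k) (hw : ∀ k, 0 ≤ w k) :
    StrictMono (fun x : ℝ => x + ∑ k, (1 - Real.exp (-β * π k * x)) * w k) ∧
    Function.Bijective (fun x : ℝ => x + ∑ k, (1 - Real.exp (-β * π k * x)) * w k) ∧
    ∀ s : ℝ, ∃! x : ℝ, x + ∑ k, (1 - Real.exp (-β * π k * x)) * w k = s := by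
  set f : ℝ → ℝ := fun x => x + ∑ k, (1 - Real.exp (-β * π k * x)) * w k with hf
  have hmono : StrictMono f := by
    intro a b hab
    have hsum : (∑ k, (1 - Real.exp (-β * π k * a)) * w k) ≤
        ∑ k, (1 - Real.exp (-β * π k * b)) * w k := by
      apply Finset.sum_le_sum
      intro k _
      apply mul_le_mul_of_nonneg_right _ (hw k)
      have : Real.exp (-β * π k * b) ≤ Real.exp (-β * π k * a) := by
        apply Real.exp_le_exp.mpr
        have h0 : 0 ≤ β * π k := mul_nonneg hβ.le (hπ k)
        nlinarith
      linarith
    simp only [hf]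
    exact add_lt_add_of_lt_of_le hab hsum
  have hcont : Continuous f := by
    apply Continuous.add continuous_id
    apply continuous_finset_sum
    intro k _
    exact (Continuous.sub continuous_const
      (Real.continuous_exp.comp (continuous_const.mul continuous_id))).mul continuous_const
  have hW : 0 ≤ ∑ k, w k := Finset.sum_nonneg fun k _ => hw k
  have hupper : ∀ x, f x ≤ x + ∑ k, w k := by
    intro x
    have : (∑ k, (1 - Real.exp (-β * π k * x)) * w k) ≤ ∑ k, w k := by
      apply Finset.sum_le_sum
      intro k _
      nlinarith [Real.exp_pos (-β * π k * x), hw k]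
    simpa [hf] using add_le_add_left this x
  have hlower : ∀ x, 0 ≤ x → x ≤ f x := by
    intro x hx
    have : (0:ℝ) ≤ ∑ k, (1 - Real.exp (-β * π k * x)) * w k := by
      apply Finset.sum_nonneg
      intro k _
      apply mul_nonneg _ (hw k)
      have : Real.exp (-β * π k * x) ≤ 1 := by
        rw [Real.exp_le_one_iff]
        have h0 : 0 ≤ β * π k := mul_nonneg hβ.le (hπ k)
        nlinarith
      linarith
    simp only [hf]; linarith
  have hsurj : Function.Surjective f := by
    intro s
    set a : ℝ := min (s - ∑ k, w k) 0 with ha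
    set b : ℝ := max s 0 with hb
    have hab : a ≤ b := le_trans (min_le_right _ _) (le_max_right _ _)
    have hfa : f a ≤ s := by
      calc f a ≤ a + ∑ k, w k := hupper a
        _ ≤ (s - ∑ k, w k) + ∑ k, w k := by
            have := min_le_left (s - ∑ k, w k) 0; linarith
        _ = s := by ring
    have hfb : s ≤ f b := le_trans (le_max_left s 0) (hlower b (le_max_right _ _))
    obtain ⟨x, _, hx⟩ := intermediate_value_Icc hab (hcont.continuousOn) ⟨hfa, hfb⟩
    exact ⟨x, hx⟩
  have hbij : Function.Bijective f := ⟨hmono.injective, hsurj⟩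
  refine ⟨hmono, hbij, fun s => ?_⟩
  obtain ⟨x, hx⟩ := hsurj s
  exact ⟨x, hx, fun y hy => hmono.injective (hy.trans hx.symm)⟩
end

section
/- Fix β > 0 and a finite set P of banks with assets A_i > 0. For every vector of liquidation demands (s_i)_{i∈P} ∈ ℝ^P there exists a unique clustered clearing equilibrium (x_i)_{i∈P}. Moreover, the aggregate X = Σ_{j∈P} x_j is the unique real solution of Σ_{i∈P} s_i = X + (1 − exp(−β·X))·Σ_{i∈P} A_i, and each component is given by x_i = s_i − (1 − exp(−β·X))·A_i. -/
open Real Filter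

/-- The aggregate clearing map is strictly monotone. -/
lemma clustered_aux_strictMono (β C : ℝ) (hβ : 0 < β) (hC : 0 ≤ C) :
    StrictMono (fun X : ℝ => X + (1 - Real.exp (-β * X)) * C) := by
  intro X Y hXY
  have h1 : Real.exp (-β * Y) < Real.exp (-β * X) := by
    apply Real.exp_lt_exp.mpr; nlinarith
  have h2 : (1 - Real.exp (-β * X)) * C ≤ (1 - Real.exp (-β * Y)) * C := by
    apply mul_le_mul_of_nonneg_right _ hC; linarith
  dsimp; linarith

/-- The aggregate clearing map is surjective. -/
lemma clustered_aux_surj (β C : ℝ) (hβ : 0 < β) (hC : 0 ≤ C) :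
    Function.Surjective (fun X : ℝ => X + (1 - Real.exp (-β * X)) * C) := by
  have hcont : Continuous (fun X : ℝ => X + (1 - Real.exp (-β * X)) * C) := by
    continuity
  apply hcont.surjective
  · refine tendsto_atTop_mono' atTop ?_ tendsto_id
    filter_upwards [eventually_ge_atTop (0 : ℝ)] with X hX
    have h1 : Real.exp (-β * X) ≤ 1 := by
      rw [← Real.exp_zero]; apply Real.exp_le_exp.mpr; nlinarith
    have : 0 ≤ (1 - Real.exp (-β * X)) * C := mul_nonneg (by linarith) hC
    simp only [id]; linarith
  · refine tendsto_atBot_mono' atBot ?_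
      (tendsto_atBot_add_const_right atBot C tendsto_id)
    filter_upwards with X
    simp only [id]
    have h1 : 0 < Real.exp (-β * X) := Real.exp_pos _
    have : (1 - Real.exp (-β * X)) * C ≤ 1 * C :=
      mul_le_mul_of_nonneg_right (by linarith) hC
    linarith

/-- Existence and uniqueness of the clustered (Counterfactual Cluster Space)
clearing equilibrium, with the aggregate characterization: the aggregate
`X = Σ x_j` uniquely solves `Σ s_i = X + (1 − exp(−β·X))·Σ A_i` and each
component satisfies `x_i = s_i − (1 − exp(−β·X))·A_i`. -/
theorem clustered_clearing_exists_unique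
    {P : Type*} [Fintype P] (β : ℝ) (hβ : 0 < β)
    (A : P → ℝ) (hA : ∀ i, 0 < A i) (s : P → ℝ) :
    (∃! x : P → ℝ, ∀ i, s i = x i + (1 - Real.exp (-β * ∑ j, x j)) * A i) ∧
    ∀ x : P → ℝ, (∀ i, s i = x i + (1 - Real.exp (-β * ∑ j, x j)) * A i) →
      ((∃! X : ℝ, ∑ i, s i = X + (1 - Real.exp (-β * X)) * ∑ i, A i) ∧
       (∑ i, s i = (∑ j, x j) + (1 - Real.exp (-β * ∑ j, x j)) * ∑ i, A i) ∧
       (∀ i, x i = s i - (1 - Real.exp (-β * ∑ j, x j)) * A i)) := by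
  classical
  set C : ℝ := ∑ i, A i with hCdef
  have hC0 : 0 ≤ C := Finset.sum_nonneg fun i _ => (hA i).le
  have hmono := clustered_aux_strictMono β C hβ hC0
  obtain ⟨X₀, hX₀⟩ := clustered_aux_surj β C hβ hC0 (∑ i, s i)
  dsimp at hX₀
  -- candidate solution
  set x₀ : P → ℝ := fun i => s i - (1 - Real.exp (-β * X₀)) * A i with hx₀def
  have hsum₀ : ∑ j, x₀ j = X₀ := by
    simp only [hx₀def, Finset.sum_sub_distrib, ← Finset.mul_sum, ← hCdef]
    linarith
  have hsol₀ : ∀ i, s i = x₀ i + (1 - Real.exp (-β * ∑ j, x₀ j)) * A i := by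
    intro i; rw [hsum₀]; simp [hx₀def]
  -- any solution has aggregate X₀
  have key : ∀ x : P → ℝ,
      (∀ i, s i = x i + (1 - Real.exp (-β * ∑ j, x j)) * A i) → ∑ j, x j = X₀ := by
    intro x hx
    have hsum : ∑ i, s i = (∑ j, x j) + (1 - Real.exp (-β * ∑ j, x j)) * C := by
      calc ∑ i, s i = ∑ i, (x i + (1 - Real.exp (-β * ∑ j, x j)) * A i) :=
            Finset.sum_congr rfl fun i _ => hx i
        _ = (∑ j, x j) + (1 - Real.exp (-β * ∑ j, x j)) * C := by
            rw [Finset.sum_add_distrib, ← Finset.mul_sum]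
    exact hmono.injective (by show _ + _ = _ + _; linarith)
  constructor
  · refine ⟨x₀, hsol₀, ?_⟩
    intro x hx
    have hXx := key x hx
    funext i
    have := hx i
    rw [hXx] at this
    simp only [hx₀def]; linarith
  · intro x hx
    have hXx := key x hx
    refine ⟨⟨X₀, by dsimp; linarith, ?_⟩, ?_, ?_⟩
    · intro Y hY
      exact hmono.injective (by show _ + _ = _ + _; linarith)
    · rw [hXx]; linarith
    · intro i; have := hx i; linarith
end

section
/- Suppose (x_i)_{i∈P} is a clustered clearing equilibrium for leverage-based demands s_i = A_i·L_i. Then for all banks i, j ∈ P: (i) cross-bank dependence holds, x_i = A_i·(θ_j − θ_i)/θ̄ + (A_i/A_j)·x_j, equivalently x_i/A_i − x_j/A_j = (θ_j − θ_i)/θ̄; and (ii) the contagion ratio identity holds, A_j·(s_i − x_i) = A_i·(s_j − x_j). -/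
/-- Cross-bank dependence and the contagion ratio identity for a clustered
clearing equilibrium with leverage-based demands `s_i = A_i·L_i`,
`L_i = (θ̄ − θ_i + (1−θ̄)·ε)/θ̄` (Proposition 2(a).2 and item 1.a of the
Perfection Lemma). -/
theorem cross_bank_dependence_and_contagion
    {P : Type*} [Fintype P] (β : ℝ) (hβ : 0 < β)
    (A : P → ℝ) (hA : ∀ i, 0 < A i)
    (θbar ε : ℝ) (hθbar0 : 0 < θbar) (hθbar1 : θbar < 1)
    (θ : P → ℝ) (hθ : ∀ i, 0 < θ i ∧ θ i < 1)
    (L : P → ℝ) (hL : ∀ i, L i = (θbar - θ i + (1 - θbar) * ε) / θbar)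
    (s : P → ℝ) (hs : ∀ i, s i = A i * L i)
    (x : P → ℝ)
    (hx : ∀ i, s i = x i + (1 - Real.exp (-β * ∑ j, x j)) * A i)
    (i j : P) :
    x i = A i * (θ j - θ i) / θbar + (A i / A j) * x j ∧
    x i / A i - x j / A j = (θ j - θ i) / θbar ∧
    A j * (s i - x i) = A i * (s j - x j) := by
  set c := 1 - Real.exp (-β * ∑ k, x k) with hc
  have hxi : x i = A i * L i - c * A i := by
    have := hx i; rw [hs i] at this; linarith
  have hxj : x j = A j * L j - c * A j := by
    have := hx j; rw [hs j] at this; linarith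
  have hAi := (hA i).ne'
  have hAj := (hA j).ne'
  have hθb := hθbar0.ne'
  refine ⟨?_, ?_, ?_⟩
  · rw [hxi, hxj, hL i, hL j]; field_simp; ring
  · rw [hxi, hxj, hL i, hL j]; field_simp; ring
  · rw [hs i, hs j, hxi, hxj]; ring
end

section
/- Let A > 0, β > 0, 0 < θ̄ < θ < 1, and set s = A·(1 − θ/θ̄) < 0. For each β > 0 let x(β) be the unique real solution of x + (1 − exp(−β·x))·A = s. Then for every β > 0: 1 < exp(−β·x(β)) < θ/θ̄; the function β ↦ exp(−β·x(β)) is strictly increasing on (0, ∞); the infimum of exp(−β·x(β)) over β > 0 equals 1; and the supremum of exp(−β·x(β)) over β > 0 equals θ/θ̄. -/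
/-- Lemma 2(e): properties of the devaluation factor `exp(−β·x(β))`, where
`x(β)` is the unique solution of `x + (1 − exp(−β·x))·A = s` with
`s = A·(1 − θ/θ̄) < 0`: it lies strictly between `1` and `θ/θ̄`, is strictly
increasing in `β`, its infimum over `β > 0` is `1` and its supremum is `θ/θ̄`. -/
theorem devaluation_factor_properties
    (A : ℝ) (hA : 0 < A)
    (θbar θ : ℝ) (hθbar0 : 0 < θbar) (hθ : θbar < θ) (hθ1 : θ < 1)
    (s : ℝ) (hs : s = A * (1 - θ / θbar))
    (x : ℝ → ℝ)
    (hx : ∀ β : ℝ, 0 < β → x β + (1 - Real.exp (-β * x β)) * A = s) :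
    (∀ β : ℝ, 0 < β → 1 < Real.exp (-β * x β) ∧ Real.exp (-β * x β) < θ / θbar) ∧
    StrictMonoOn (fun β => Real.exp (-β * x β)) (Set.Ioi 0) ∧
    IsGLB ((fun β => Real.exp (-β * x β)) '' Set.Ioi 0) 1 ∧
    IsLUB ((fun β => Real.exp (-β * x β)) '' Set.Ioi 0) (θ / θbar) := by
  have hr1 : 1 < θ / θbar := (one_lt_div hθbar0).mpr hθ
  have hs' : A - s = θ / θbar * A := by rw [hs]; ring
  have hs0 : s < 0 := by nlinarith
  -- x β < 0
  have hxneg : ∀ β : ℝ, 0 < β → x β < 0 := by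
    intro β hβ
    by_contra h
    push_neg at h
    have h1 : Real.exp (-β * x β) ≤ 1 := by
      apply Real.exp_le_one_iff.mpr
      nlinarith
    nlinarith [hx β hβ]
  have hE1 : ∀ β : ℝ, 0 < β → 1 < Real.exp (-β * x β) := by
    intro β hβ
    have hx0 := hxneg β hβ
    have : (0:ℝ) < -β * x β := by nlinarith
    calc (1:ℝ) = Real.exp 0 := by simp
      _ < Real.exp (-β * x β) := Real.exp_lt_exp.mpr this
  have hE2 : ∀ β : ℝ, 0 < β → Real.exp (-β * x β) < θ / θbar := by
    intro β hβ
    have heq := hx β hβ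
    have hx0 := hxneg β hβ
    nlinarith [heq, hx0, hs']
  -- x β > s
  have hxgs : ∀ β : ℝ, 0 < β → s < x β := by
    intro β hβ
    have heq := hx β hβ
    have h1 := hE1 β hβ
    nlinarith
  -- strict monotonicity
  have hmono : ∀ β1 β2 : ℝ, 0 < β1 → β1 < β2 →
      Real.exp (-β1 * x β1) < Real.exp (-β2 * x β2) := by
    intro β1 β2 hβ1 h12
    have hβ2 : 0 < β2 := hβ1.trans h12
    by_contra h
    push_neg at h
    have h1 := hx β1 hβ1
    have h2 := hx β2 hβ2
    have hd : x β1 - x β2 = (Real.exp (-β1 * x β1) - Real.exp (-β2 * x β2)) * A := by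
      nlinarith [h1, h2]
    have hx12 : x β2 ≤ x β1 := by nlinarith
    have hn1 := hxneg β1 hβ1
    have : Real.exp (-β1 * x β1) < Real.exp (-β2 * x β2) := by
      apply Real.exp_lt_exp.mpr
      nlinarith
    linarith
  refine ⟨fun β hβ => ⟨hE1 β hβ, hE2 β hβ⟩, ?_, ?_, ?_⟩
  · intro a ha b hb hab
    exact hmono a b (Set.mem_Ioi.mp ha) hab
  · constructor
    · rintro y ⟨β, hβ, rfl⟩
      exact le_of_lt (hE1 β (Set.mem_Ioi.mp hβ))
    · intro b hb
      by_contra hc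
      push_neg at hc
      set β := Real.log b / (-s) with hβdef
      have hβ : 0 < β := div_pos (Real.log_pos hc) (neg_pos.mpr hs0)
      have hxs := hxgs β hβ
      have hlt : Real.exp (-β * x β) < Real.exp (-β * s) := by
        apply Real.exp_lt_exp.mpr
        nlinarith
      have hne : s ≠ 0 := ne_of_lt hs0
      have heq : -β * s = Real.log b := by
        rw [hβdef]; field_simp
      have hbb : Real.exp (-β * s) = b := by
        rw [heq, Real.exp_log (by linarith : (0:ℝ) < b)]
      have hmem : Real.exp (-β * x β) ∈ (fun β => Real.exp (-β * x β)) '' Set.Ioi 0 :=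
        ⟨β, Set.mem_Ioi.mpr hβ, rfl⟩
      have := hb hmem
      rw [hbb] at hlt
      linarith
  · constructor
    · rintro y ⟨β, hβ, rfl⟩
      exact le_of_lt (hE2 β (Set.mem_Ioi.mp hβ))
    · intro b hb
      by_contra hc
      push_neg at hc
      have hb1 : 1 < b := by
        have hm : Real.exp (-1 * x 1) ∈ (fun β => Real.exp (-β * x β)) '' Set.Ioi 0 :=
          ⟨1, Set.mem_Ioi.mpr one_pos, rfl⟩
        have := hb hm
        have := hE1 1 one_pos
        linarith
      set t0 : ℝ := s + (b - 1) * A with ht0def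
      have ht0 : t0 < 0 := by nlinarith
      set β := Real.log b / (-t0) + 1 with hβdef
      have hβ : 0 < β := by
        have h0 : 0 < Real.log b / (-t0) := div_pos (Real.log_pos hb1) (neg_pos.mpr ht0)
        rw [hβdef]
        linarith
      have ht0ne : t0 ≠ 0 := ne_of_lt ht0
      have hlb : Real.log b < -β * t0 := by
        have hd : Real.log b / (-t0) * (-t0) = Real.log b := by field_simp
        have : -β * t0 = Real.log b / (-t0) * (-t0) + (-t0) := by rw [hβdef]; ring
        rw [this, hd]
        linarith
      have hexpb : b < Real.exp (-β * t0) := by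
        calc b = Real.exp (Real.log b) := (Real.exp_log (by linarith)).symm
          _ < Real.exp (-β * t0) := Real.exp_lt_exp.mpr hlb
      have hEb : b < Real.exp (-β * x β) := by
        by_contra hle
        push_neg at hle
        have heq := hx β hβ
        have hxle : x β ≤ t0 := by nlinarith
        have : Real.exp (-β * t0) ≤ Real.exp (-β * x β) := by
          apply Real.exp_le_exp.mpr
          nlinarith
        linarith
      have hmem : Real.exp (-β * x β) ∈ (fun β => Real.exp (-β * x β)) '' Set.Ioi 0 :=
        ⟨β, Set.mem_Ioi.mpr hβ, rfl⟩
      have := hb hmem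
      linarith
end

section
/- Fix β > 0 and a finite set P of banks with assets A_i > 0 and demands s_i ∈ ℝ. Let (y_i)_{i∈P} be a clustered clearing equilibrium and, for each i, let z_i be bank i's counterfactual monopoly solution. If y_i ≥ 0 for every i ∈ P (a pure bail-in cluster), then y_i ≤ z_i for every i; moreover, y_i < z_i for every bank i such that Σ_{j∈P, j≠i} y_j > 0. That is, banks whose clustered liquidations are all nonnegative liquidate (weakly) less inside the cluster than they would as independent entities. -/
private lemma f_strictMono (β : ℝ) (hβ : 0 < β) (a : ℝ) (ha : 0 < a) :
    StrictMono (fun t : ℝ => t + (1 - Real.exp (-β * t)) * a) := by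
  have hmono : Monotone (fun t : ℝ => (1 - Real.exp (-β * t)) * a) := by
    intro u v huv
    have : Real.exp (-β * v) ≤ Real.exp (-β * u) := by
      apply Real.exp_le_exp.2
      nlinarith
    have := ha.le
    dsimp only
    nlinarith
  exact (strictMono_id.add_monotone hmono)

/-- Lemma 4(a) (Partition and Homophily): in a pure bail-in cluster (all
clustered liquidations nonnegative), every bank liquidates weakly less inside
the cluster than as an independent entity, and strictly less whenever the
other banks' clustered liquidations sum to a positive amount. -/
theorem pure_bail_in_cluster_incentive_compatible
    {P : Type*} [Fintype P] [DecidableEq P] (β : ℝ) (hβ : 0 < β)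
    (A : P → ℝ) (hA : ∀ i, 0 < A i) (s : P → ℝ)
    (y z : P → ℝ)
    (hy : ∀ i, s i = y i + (1 - Real.exp (-β * ∑ j, y j)) * A i)
    (hz : ∀ i, s i = z i + (1 - Real.exp (-β * z i)) * A i)
    (hpos : ∀ i, 0 ≤ y i) :
    (∀ i, y i ≤ z i) ∧
    (∀ i, 0 < ∑ j ∈ Finset.univ.erase i, y j → y i < z i) := by
  have hsum : ∀ i, (∑ j, y j) = y i + ∑ j ∈ Finset.univ.erase i, y j := by
    intro i
    rw [add_comm, Finset.sum_erase_add _ _ (Finset.mem_univ i)]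
  have key : ∀ i, y i + (1 - Real.exp (-β * y i)) * A i ≤
      z i + (1 - Real.exp (-β * z i)) * A i := by
    intro i
    rw [← hz i, hy i]
    have hle : y i ≤ ∑ j, y j := by
      rw [hsum i]
      have h0 : (0:ℝ) ≤ ∑ j ∈ Finset.univ.erase i, y j :=
        Finset.sum_nonneg (fun j _ => hpos j)
      linarith
    have : Real.exp (-β * ∑ j, y j) ≤ Real.exp (-β * y i) := by
      apply Real.exp_le_exp.2; nlinarith
    nlinarith [(hA i).le]
  constructor
  · intro i
    exact (f_strictMono β hβ (A i) (hA i)).le_iff_le.1 (key i)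
  · intro i hi
    have hlt : y i < ∑ j, y j := by rw [hsum i]; linarith
    have keylt : y i + (1 - Real.exp (-β * y i)) * A i <
        z i + (1 - Real.exp (-β * z i)) * A i := by
      rw [← hz i, hy i]
      have : Real.exp (-β * ∑ j, y j) < Real.exp (-β * y i) := by
        apply Real.exp_lt_exp.2; nlinarith
      nlinarith [hA i]
    exact (f_strictMono β hβ (A i) (hA i)).lt_iff_lt.1 keylt
end

section
/- Fix β > 0 and a finite set P of banks with |P| ≥ 2, assets A_i > 0 and demands s_i ∈ ℝ. Let (y_i)_{i∈P} be a clustered clearing equilibrium and, for each i, let z_i be bank i's counterfactual monopoly solution. If y_i < 0 for every i ∈ P (a pure bailout cluster), then z_i < y_i < 0 for every i ∈ P. That is, credit-creating banks create strictly less credit inside the cluster than they would as independent entities. -/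
/-- Lemma 4(b) (Partition and Homophily): in a pure bailout cluster (all
clustered liquidations negative, at least two banks), every bank creates
strictly less credit inside the cluster than it would as an independent
entity: `z_i < y_i < 0`. -/
theorem pure_bailout_cluster_not_incentive_compatible
    {P : Type*} [Fintype P] (β : ℝ) (hβ : 0 < β)
    (hcard : 2 ≤ Fintype.card P)
    (A : P → ℝ) (hA : ∀ i, 0 < A i) (s : P → ℝ)
    (y z : P → ℝ)
    (hy : ∀ i, s i = y i + (1 - Real.exp (-β * ∑ j, y j)) * A i)
    (hz : ∀ i, s i = z i + (1 - Real.exp (-β * z i)) * A i)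
    (hneg : ∀ i, y i < 0) :
    ∀ i, z i < y i ∧ y i < 0 := by
  intro i
  classical
  refine ⟨?_, hneg i⟩
  have hS : ∑ j, y j < y i := by
    have hsplit : ∑ j, y j = y i + ∑ j ∈ Finset.univ.erase i, y j :=
      (Finset.add_sum_erase _ _ (Finset.mem_univ i)).symm
    have hne : (Finset.univ.erase i).Nonempty := by
      rw [← Finset.card_pos, Finset.card_erase_of_mem (Finset.mem_univ i)]
      rw [Finset.card_univ]; omega
    have hrest : ∑ j ∈ Finset.univ.erase i, y j < 0 :=
      Finset.sum_neg (fun j _ => hneg j) hne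
    linarith
  by_contra h
  push_neg at h
  have h1 : Real.exp (-β * z i) < Real.exp (-β * ∑ j, y j) := by
    apply Real.exp_lt_exp.2
    nlinarith
  have h2 := (hy i).symm.trans (hz i)
  nlinarith [hA i]
end

section
/- Let I (incumbents) and E (entrants) be disjoint finite sets of banks with assets A_i > 0 and demands s_i ∈ ℝ, and fix β > 0. Let (u_i)_{i∈I} be the clustered clearing equilibrium of the system on I, and let (v_i)_{i∈I∪E} be the clustered clearing equilibrium of the system on I ∪ E. If the entrants' total equilibrium liquidation is negative, Σ_{e∈E} v_e < 0, then every incumbent's equilibrium liquidation strictly increases: u_i < v_i for all i ∈ I. -/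
/-- Crowding-out effect (Lemma 5(a)/(c), Persistence of Substitution): if the
entrants' total equilibrium liquidation in the enlarged system is negative,
then every incumbent's equilibrium liquidation strictly increases. -/
theorem crowding_out_negative_entrants
    {B : Type*} [DecidableEq B] (β : ℝ) (hβ : 0 < β)
    (I E : Finset B) (hdisj : Disjoint I E)
    (A s : B → ℝ) (hA : ∀ i ∈ I ∪ E, 0 < A i)
    (u v : B → ℝ)
    (hu : ∀ i ∈ I, s i = u i + (1 - Real.exp (-β * ∑ j ∈ I, u j)) * A i)
    (hv : ∀ i ∈ I ∪ E, s i = v i + (1 - Real.exp (-β * ∑ j ∈ I ∪ E, v j)) * A i)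
    (hEneg : ∑ e ∈ E, v e < 0) :
    ∀ i ∈ I, u i < v i := by
  set U := ∑ j ∈ I, u j with hU
  set V := ∑ j ∈ I ∪ E, v j with hV
  have hVsplit : V = ∑ j ∈ I, v j + ∑ j ∈ E, v j := Finset.sum_union hdisj
  have hSA : 0 ≤ ∑ j ∈ I, A j :=
    Finset.sum_nonneg fun j hj => (hA j (Finset.mem_union_left E hj)).le
  have hsumu : ∑ j ∈ I, s j = U + (1 - Real.exp (-β * U)) * ∑ j ∈ I, A j := by
    rw [Finset.sum_congr rfl hu, Finset.sum_add_distrib, ← Finset.mul_sum]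
  have hsumv : ∑ j ∈ I, s j
      = (∑ j ∈ I, v j) + (1 - Real.exp (-β * V)) * ∑ j ∈ I, A j := by
    rw [Finset.sum_congr rfl (fun j hj => hv j (Finset.mem_union_left E hj)),
      Finset.sum_add_distrib, ← Finset.mul_sum]
  have hVlt : V < ∑ j ∈ I, v j := by linarith
  have hUV : V < U := by
    by_contra h
    push_neg at h
    have hexp : Real.exp (-β * V) ≤ Real.exp (-β * U) := by
      apply Real.exp_le_exp.mpr; nlinarith
    nlinarith [mul_nonneg (sub_nonneg.mpr hexp) hSA]
  intro i hi
  have h1 := hu i hi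
  have h2 := hv i (Finset.mem_union_left E hi)
  have hexplt : Real.exp (-β * U) < Real.exp (-β * V) := by
    apply Real.exp_lt_exp.mpr; nlinarith
  nlinarith [mul_pos (sub_pos.mpr hexplt) (hA i (Finset.mem_union_left E hi))]
end

section
/- Let I (incumbents) and E (entrants) be disjoint finite sets of banks with assets A_i > 0 and demands s_i ∈ ℝ, and fix β > 0. Let (u_i)_{i∈I} be the clustered clearing equilibrium of the system on I, and let (v_i)_{i∈I∪E} be the clustered clearing equilibrium of the system on I ∪ E. If the entrants' total equilibrium liquidation is positive, Σ_{e∈E} v_e > 0, then every incumbent's equilibrium liquidation strictly decreases: v_i < u_i for all i ∈ I. -/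
/-- Crowding-out effect (Lemma 5(b)/(d), Emergence of Complementarity): if the
entrants' total equilibrium liquidation in the enlarged system is positive,
then every incumbent's equilibrium liquidation strictly decreases. -/
theorem crowding_out_positive_entrants
    {B : Type*} [DecidableEq B] (β : ℝ) (hβ : 0 < β)
    (I E : Finset B) (hdisj : Disjoint I E)
    (A s : B → ℝ) (hA : ∀ i ∈ I ∪ E, 0 < A i)
    (u v : B → ℝ)
    (hu : ∀ i ∈ I, s i = u i + (1 - Real.exp (-β * ∑ j ∈ I, u j)) * A i)
    (hv : ∀ i ∈ I ∪ E, s i = v i + (1 - Real.exp (-β * ∑ j ∈ I ∪ E, v j)) * A i)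
    (hEpos : 0 < ∑ e ∈ E, v e) :
    ∀ i ∈ I, v i < u i := by
  set U := ∑ j ∈ I, u j with hU
  set V := ∑ j ∈ I ∪ E, v j with hVdef
  have hAI : 0 ≤ ∑ j ∈ I, A j :=
    Finset.sum_nonneg fun j hj => (hA j (Finset.mem_union_left E hj)).le
  -- sum the incumbent equations in both systems
  have h1 : ∑ j ∈ I, s j = U + (1 - Real.exp (-β * U)) * ∑ j ∈ I, A j := by
    rw [Finset.sum_congr rfl hu, Finset.sum_add_distrib, ← Finset.mul_sum]
  have h2 : ∑ j ∈ I, s j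
      = (∑ j ∈ I, v j) + (1 - Real.exp (-β * V)) * ∑ j ∈ I, A j := by
    rw [Finset.sum_congr rfl (fun j hj => hv j (Finset.mem_union_left E hj)),
      Finset.sum_add_distrib, ← Finset.mul_sum]
  have hVsplit : V = (∑ j ∈ I, v j) + ∑ e ∈ E, v e := by
    rw [hVdef, Finset.sum_union hdisj]
  have hUV : U < V := by
    by_contra h
    push_neg at h
    have hexp : Real.exp (-β * U) ≤ Real.exp (-β * V) := by
      apply Real.exp_le_exp.mpr
      nlinarith
    have hIv : U ≤ ∑ j ∈ I, v j := by nlinarith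
    nlinarith
  have hexp : Real.exp (-β * V) < Real.exp (-β * U) := by
    apply Real.exp_lt_exp.mpr
    nlinarith
  intro i hi
  have e1 := hu i hi
  have e2 := hv i (Finset.mem_union_left E hi)
  have hAi := hA i (Finset.mem_union_left E hi)
  nlinarith [mul_pos (sub_pos.mpr hexp) hAi]
end

section
/- Let P = P⁺ ∪ P⁻ be a finite set of banks partitioned into two nonempty disjoint subsets, with assets A_i > 0, demands s_i ∈ ℝ, and β > 0. Let (w_i)_{i∈P} be the clustered clearing equilibrium of the full system on P, let (u⁺_i)_{i∈P⁺} be that of the subsystem on P⁺, and (u⁻_j)_{j∈P⁻} that of the subsystem on P⁻. If u⁺_i ≥ 0 for every i ∈ P⁺ and u⁻_j < 0 for every j ∈ P⁻, then u⁺_i < w_i for every i ∈ P⁺ and u⁻_j > w_j for every j ∈ P⁻. That is, joining the combined cluster forces every P⁺ bank to sell strictly more and allows every P⁻ bank to create strictly more credit, so the two groups have opposite incentives to cluster. -/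
private lemma fmono_lt (β : ℝ) (hβ : 0 < β) {a b : ℝ} (h : a < b) :
    1 - Real.exp (-β * a) < 1 - Real.exp (-β * b) := by
  have h1 : -β * b < -β * a := by nlinarith
  have := Real.exp_lt_exp.mpr h1
  linarith

private lemma fmono_le (β : ℝ) (hβ : 0 < β) {a b : ℝ} (h : a ≤ b) :
    1 - Real.exp (-β * a) ≤ 1 - Real.exp (-β * b) := by
  have h1 : -β * b ≤ -β * a := by nlinarith
  have := Real.exp_le_exp.mpr h1
  linarith

/-- Lemma 3 (Opposite Incentives): if the subsystem equilibrium on `P⁺` is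
entirely nonnegative and the subsystem equilibrium on `P⁻` is entirely
negative, then in the combined system every `P⁺` bank sells strictly more
(`u⁺_i < w_i`) and every `P⁻` bank creates strictly more credit
(`w_j < u⁻_j`). -/
theorem opposite_incentives
    {B : Type*} [DecidableEq B] (β : ℝ) (hβ : 0 < β)
    (Pp Pm : Finset B) (hdisj : Disjoint Pp Pm)
    (hPp : Pp.Nonempty) (hPm : Pm.Nonempty)
    (A s : B → ℝ) (hA : ∀ i ∈ Pp ∪ Pm, 0 < A i)
    (w up um : B → ℝ)
    (hw : ∀ i ∈ Pp ∪ Pm,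
      s i = w i + (1 - Real.exp (-β * ∑ j ∈ Pp ∪ Pm, w j)) * A i)
    (hup : ∀ i ∈ Pp, s i = up i + (1 - Real.exp (-β * ∑ j ∈ Pp, up j)) * A i)
    (hum : ∀ j ∈ Pm, s j = um j + (1 - Real.exp (-β * ∑ k ∈ Pm, um k)) * A j)
    (hupPos : ∀ i ∈ Pp, 0 ≤ up i) (humNeg : ∀ j ∈ Pm, um j < 0) :
    (∀ i ∈ Pp, up i < w i) ∧ (∀ j ∈ Pm, w j < um j) := by
  set X := ∑ j ∈ Pp ∪ Pm, w j with hXdef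
  set U := ∑ j ∈ Pp, up j with hUdef
  set V := ∑ k ∈ Pm, um k with hVdef
  set Fx := 1 - Real.exp (-β * X) with hFxdef
  set Fu := 1 - Real.exp (-β * U) with hFudef
  set Fv := 1 - Real.exp (-β * V) with hFvdef
  have hSAp : 0 < ∑ i ∈ Pp, A i :=
    Finset.sum_pos (fun i hi => hA i (Finset.mem_union_left _ hi)) hPp
  have hSAm : 0 < ∑ i ∈ Pm, A i :=
    Finset.sum_pos (fun i hi => hA i (Finset.mem_union_right _ hi)) hPm
  have hU0 : 0 ≤ U := Finset.sum_nonneg hupPos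
  have hV0 : V < 0 := by
    have := Finset.sum_lt_sum_of_nonempty hPm (f := um) (g := fun _ => (0:ℝ))
      (fun i hi => humNeg i hi)
    simpa using this
  -- sum of full-system equations
  have hsumW : ∑ i ∈ Pp ∪ Pm, s i = X + Fx * ∑ i ∈ Pp ∪ Pm, A i := by
    rw [Finset.sum_congr rfl hw, Finset.sum_add_distrib, ← Finset.mul_sum]
  have hsumU : ∑ i ∈ Pp, s i = U + Fu * ∑ i ∈ Pp, A i := by
    rw [Finset.sum_congr rfl hup, Finset.sum_add_distrib, ← Finset.mul_sum]
  have hsumV : ∑ i ∈ Pm, s i = V + Fv * ∑ i ∈ Pm, A i := by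
    rw [Finset.sum_congr rfl hum, Finset.sum_add_distrib, ← Finset.mul_sum]
  have hsSplit : ∑ i ∈ Pp ∪ Pm, s i = ∑ i ∈ Pp, s i + ∑ i ∈ Pm, s i :=
    Finset.sum_union hdisj
  have hASplit : ∑ i ∈ Pp ∪ Pm, A i = ∑ i ∈ Pp, A i + ∑ i ∈ Pm, A i :=
    Finset.sum_union hdisj
  have key : X + Fx * (∑ i ∈ Pp, A i + ∑ i ∈ Pm, A i)
      = U + Fu * ∑ i ∈ Pp, A i + (V + Fv * ∑ i ∈ Pm, A i) := by
    rw [← hASplit, ← hsumW, hsSplit, hsumU, hsumV]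
  have hXU : X < U := by
    by_contra h
    push_neg at h
    have hFu : Fu ≤ Fx := fmono_le β hβ h
    have hFv : Fv < Fx := fmono_lt β hβ (by linarith)
    nlinarith [mul_nonneg (sub_nonneg.mpr hFu) hSAp.le,
      mul_pos (sub_pos.mpr hFv) hSAm]
  have hVX : V < X := by
    by_contra h
    push_neg at h
    have hFv : Fx ≤ Fv := fmono_le β hβ h
    have hFu : Fx < Fu := fmono_lt β hβ (by linarith)
    nlinarith [mul_pos (sub_pos.mpr hFu) hSAp,
      mul_nonneg (sub_nonneg.mpr hFv) hSAm.le]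
  have hFxu : Fx < Fu := fmono_lt β hβ hXU
  have hFvx : Fv < Fx := fmono_lt β hβ hVX
  constructor
  · intro i hi
    have h1 := hw i (Finset.mem_union_left _ hi)
    have h2 := hup i hi
    have hAi := hA i (Finset.mem_union_left _ hi)
    nlinarith [mul_pos (sub_pos.mpr hFxu) hAi]
  · intro j hj
    have h1 := hw j (Finset.mem_union_right _ hj)
    have h2 := hum j hj
    have hAj := hA j (Finset.mem_union_right _ hj)
    nlinarith [mul_pos (sub_pos.mpr hFvx) hAj]
end

section
/- Consider the multi-industry clearing system: finite sets I (banks) and K (industries), β > 0, nonnegative weights π_{ik} and p_{ki}, and industry values M_k ≥ 0. Suppose x ∈ ℝ^I satisfies s_i = x_i + Σ_{k∈K} (1 − exp(−β·Σ_{j∈I} x_j·π_{jk}))·M_k·p_{ki} for every i ∈ I, and suppose the aggregate fire-sale exposure is nonnegative in every industry: Σ_{j∈I} x_j·π_{jk} ≥ 0 for all k ∈ K. Then every bank p with s_p < 0 satisfies x_p < 0. In particular, if s_p = (1/θ̄)·(θ̄·A_p − E_p + (1−θ̄)·ε·A_p) with A_p > 0, 0 < E_p < A_p, 0 < θ̄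 < 1, and ε < (E_p/A_p − θ̄)/(1−θ̄), then x_p < 0, so at least one component of x is negative. -/
/-!
Nonnegative aggregate exposure `Σ_j x_j π_jk ≥ 0` makes every factor `1 - exp (-β ·)` of the
devaluation loss nonnegative, so each bank's loss is nonnegative and `x_i ≤ s_i`. A bank with
negative demand therefore sells a negative amount, and a moderate shock makes the
leverage-based demand negative.
-/

theorem one_sub_exp_neg_mul_nonneg {β t : ℝ} (hβ : 0 ≤ β) (ht : 0 ≤ t) :
    0 ≤ 1 - Real.exp (-β * t) := by
  have : -β * t ≤ 0 := by nlinarith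
  linarith [Real.exp_le_one_iff.mpr this]

theorem devaluation_loss_nonneg {I K : Type*} [Fintype K] {β : ℝ} (hβ : 0 ≤ β)
    {y M : K → ℝ} (hy : ∀ k, 0 ≤ y k) (hM : ∀ k, 0 ≤ M k)
    {p : K → I → ℝ} (hp : ∀ k i, 0 ≤ p k i) (i : I) :
    0 ≤ ∑ k, (1 - Real.exp (-β * y k)) * M k * p k i :=
  Finset.sum_nonneg fun k _ =>
    mul_nonneg (mul_nonneg (one_sub_exp_neg_mul_nonneg hβ (hy k)) (hM k)) (hp k i)

theorem leverage_demand_neg_of_moderate_shock {A E θbar ε : ℝ} (hA : 0 < A)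
    (hθ : 0 < θbar) (hθ1 : θbar < 1) (hε : ε < (E / A - θbar) / (1 - θbar)) :
    (1 / θbar) * (θbar * A - E + (1 - θbar) * ε * A) < 0 := by
  have hεA : (1 - θbar) * ε * A < E - θbar * A := by
    calc (1 - θbar) * ε * A < (E / A - θbar) * A := by
          gcongr
          rwa [← lt_div_iff₀' (by linarith)]
      _ = E - θbar * A := by field_simp
  exact mul_neg_of_pos_of_neg (by positivity) (by linarith)

theorem moderate_shock_credit_creation_general
    {I K : Type*} [Fintype I] [Fintype K] (β : ℝ) (hβ : 0 < β)
    (π : I → K → ℝ)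
    (p : K → I → ℝ) (hp : ∀ k i, 0 ≤ p k i)
    (M : K → ℝ) (hM : ∀ k, 0 ≤ M k)
    (s x : I → ℝ)
    (hx : ∀ i, s i = x i +
      ∑ k, (1 - Real.exp (-β * ∑ j, x j * π j k)) * M k * p k i)
    (hexp : ∀ k, 0 ≤ ∑ j, x j * π j k) :
    (∀ i : I, s i < 0 → x i < 0) ∧
    (∀ (i : I) (A E θbar ε : ℝ), 0 < A → 0 < E → E < A →
      0 < θbar → θbar < 1 →
      ε < (E / A - θbar) / (1 - θbar) →
      s i = (1 / θbar) * (θbar * A - E + (1 - θbar) * ε * A) →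
      x i < 0) := by
  have credit_creation : ∀ i : I, s i < 0 → x i < 0 := fun i hsi => by
    linarith [hx i, devaluation_loss_nonneg hβ.le hexp hM hp i]
  refine ⟨credit_creation, fun i A E θbar ε hA _ _ hθ hθ1 hε hs => credit_creation i ?_⟩
  exact hs ▸ leverage_demand_neg_of_moderate_shock hA hθ hθ1 hε

/-- Proposition 1(b): in the multi-industry clearing system with nonnegative
aggregate fire-sale exposure in every industry, every bank with negative
liquidation demand engages in credit creation (`x_p < 0`); in particular a
bank with leverage-based demand under a moderate shock
`ε < (E_p/A_p − θ̄)/(1−θ̄)` has `x_p < 0`. -/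
theorem moderate_shock_credit_creation
    {I K : Type*} [Fintype I] [Fintype K] (β : ℝ) (hβ : 0 < β)
    (π : I → K → ℝ) (hπ : ∀ i k, 0 ≤ π i k)
    (p : K → I → ℝ) (hp : ∀ k i, 0 ≤ p k i)
    (M : K → ℝ) (hM : ∀ k, 0 ≤ M k)
    (s x : I → ℝ)
    (hx : ∀ i, s i = x i +
      ∑ k, (1 - Real.exp (-β * ∑ j, x j * π j k)) * M k * p k i)
    (hexp : ∀ k, 0 ≤ ∑ j, x j * π j k) :
    (∀ i : I, s i < 0 → x i < 0) ∧
    (∀ (i : I) (A E θbar ε : ℝ), 0 < A → 0 < E → E < A →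
      0 < θbar → θbar < 1 →
      ε < (E / A - θbar) / (1 - θbar) →
      s i = (1 / θbar) * (θbar * A - E + (1 - θbar) * ε * A) →
      x i < 0) :=
  moderate_shock_credit_creation_general β hβ π p hp M hM s x hx hexp
end

section
/- Suppose (x_i)_{i∈P} is a clustered clearing equilibrium for leverage-based demands s_i = A_i·L_i, and suppose bank m has the (weakly) highest leverage ratio, θ_m ≥ θ_k for all k ∈ P, and negative liquidation demand s_m < 0. Then x_m < 0, regardless of the value of β > 0 and of the asset sizes. -/
/-- The bank with the (weakly) highest leverage ratio and negative liquidation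
demand always engages in credit creation in the clustered clearing
equilibrium, regardless of `β` and of asset sizes (generalizing item 3 of
Proposition 3). -/
theorem highest_leverage_bank_creates_credit
    {P : Type*} [Fintype P] (β : ℝ) (hβ : 0 < β)
    (A : P → ℝ) (hA : ∀ i, 0 < A i)
    (θbar ε : ℝ) (hθbar0 : 0 < θbar) (hθbar1 : θbar < 1)
    (θ : P → ℝ) (hθ : ∀ i, 0 < θ i ∧ θ i < 1)
    (L : P → ℝ) (hL : ∀ i, L i = (θbar - θ i + (1 - θbar) * ε) / θbar)
    (s : P → ℝ) (hs : ∀ i, s i = A i * L i)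
    (x : P → ℝ)
    (hx : ∀ i, s i = x i + (1 - Real.exp (-β * ∑ j, x j)) * A i)
    (m : P) (hm : ∀ k, θ k ≤ θ m) (hsm : s m < 0) :
    x m < 0 := by
  by_contra h
  push_neg at h
  set S := ∑ j, x j with hS
  set c := 1 - Real.exp (-β * S) with hc
  -- c * A m = s m - x m < 0, so c < 0 and c ≤ L m
  have hxm := hx m
  have hcA : c * A m = s m - x m := by linarith
  have hcneg : c < 0 := by
    have : c * A m < 0 := by linarith
    exact neg_of_mul_neg_left this (hA m).le
  have hLm : c ≤ L m := by
    have hAm := hA m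
    have h1 : c * A m ≤ s m := by linarith
    rw [hs m] at h1
    nlinarith
  -- L m ≤ L i for all i, hence x i ≥ 0
  have hxi : ∀ i, 0 ≤ x i := by
    intro i
    have hLi : L m ≤ L i := by
      rw [hL i, hL m]
      gcongr (θbar - ?_ + (1 - θbar) * ε) / θbar
      exact hm i
    have hxieq := hx i
    have hxe : x i = A i * (L i - c) := by
      rw [hs i] at hxieq
      rw [mul_sub]
      linarith [mul_comm (A i) c]
    rw [hxe]
    exact mul_nonneg (hA i).le (by linarith)
  -- So S ≥ 0, hence c ≥ 0, contradiction
  have hSpos : 0 ≤ S := Finset.sum_nonneg fun i _ => hxi i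
  have : Real.exp (-β * S) ≤ 1 := by
    rw [Real.exp_le_one_iff]
    have : 0 ≤ β * S := mul_nonneg hβ.le hSpos
    linarith
  have : 0 ≤ c := by rw [hc]; linarith
  linarith
end

section
/- Let two banks i, j have assets A_i, A_j > 0 and leverage ratios satisfying 0 < θ̄ < θ_j < θ_i < 1, and set the zero-shock demands s_k = A_k·(θ̄ − θ_k)/θ̄ < 0 for k ∈ {i, j}. For each β > 0 let (x_i(β), x_j(β)) be the unique clustered clearing equilibrium of the two-bank system. Then there exists a unique threshold β* > 0 such that x_j(β*) = 0; moreover x_j(β) < 0 for all 0 < β < β*, and x_j(β) > 0 for all β > β*. -/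
/-!
With `E = exp (-β (x_i + x_j))`, the clearing equations say `x_k = A_k (E - θ_k / θ̄)`, so `x_j` has
the sign of `E - c` with `c = θ_j / θ̄ > 1`. Summing them, the aggregate `S = x_i + x_j` satisfies
`S - S₀ = (A_i + A_j) (E - c)` with `S₀ = A_i (θ_j - θ_i) / θ̄ < 0`, which forces `E - c` to have the
sign of `exp (-β S₀) - c`. That quantity is strictly increasing in `β` and vanishes exactly at
`β* = log c / (-S₀)`.
-/

open Real

lemma StrictMono.sign_sub {α β : Type*} [AddCommGroup α] [LinearOrder α] [IsOrderedAddMonoid α]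
    [AddCommGroup β] [LinearOrder β] [IsOrderedAddMonoid β] {f : α → β} (hf : StrictMono f)
    (a b : α) :
    SignType.sign (f a - f b) = SignType.sign (a - b) := by
  rcases lt_trichotomy a b with h | rfl | h
  · rw [sign_neg (sub_neg.2 (hf h)), sign_neg (sub_neg.2 h)]
  · simp
  · rw [sign_pos (sub_pos.2 (hf h)), sign_pos (sub_pos.2 h)]

lemma liquidation_eq_of_clearing {A θbar θ x E : ℝ} (hθbar : θbar ≠ 0)
    (h : A * (θbar - θ) / θbar = x + (1 - E) * A) : x = A * (E - θ / θbar) := by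
  field_simp at h ⊢
  linarith

/- `exp (-β S)` lies above `c` exactly when `S` lies above `S₀`, and then `exp (-β S₀)` lies above
`exp (-β S)`; symmetrically below. -/
lemma sign_exp_sub_eq_of_fixedPoint {β S S₀ A c : ℝ} (hβ : 0 < β) (hA : 0 < A)
    (hS : S - S₀ = A * (exp (-β * S) - c)) :
    SignType.sign (exp (-β * S) - c) = SignType.sign (exp (-β * S₀) - c) := by
  rcases lt_trichotomy (exp (-β * S)) c with h | h | h
  · have hSS₀ : S < S₀ := by nlinarith
    have hexp : exp (-β * S₀) < exp (-β * S) := exp_lt_exp.2 (by nlinarith)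
    rw [sign_neg (sub_neg.2 h), sign_neg (by linarith)]
  · have hSS₀ : S = S₀ := by rw [h, sub_self, mul_zero, sub_eq_zero] at hS; exact hS
    rw [hSS₀]
  · have hSS₀ : S₀ < S := by nlinarith
    have hexp : exp (-β * S) < exp (-β * S₀) := exp_lt_exp.2 (by nlinarith)
    rw [sign_pos (sub_pos.2 h), sign_pos (by linarith)]

lemma existsUnique_threshold_of_sign_eq {f : ℝ → ℝ} {b : ℝ} (hb : 0 < b)
    (hf : ∀ β, 0 < β → SignType.sign (f β) = SignType.sign (β - b)) :
    ∃! b' : ℝ, 0 < b' ∧ f b' = 0 ∧ (∀ β, 0 < β → β < b' → f β < 0) ∧ (∀ β, b' < β → 0 < f β) := by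
  refine ⟨b, ⟨hb, ?_, fun β hβ hβb => ?_, fun β hbβ => ?_⟩, ?_⟩
  · simpa using hf b hb
  · simpa [sign_eq_neg_one_iff, hβb] using hf β hβ
  · simpa [sign_eq_one_iff, hbβ] using hf β (hb.trans hbβ)
  · rintro b' ⟨hb', hfb', -⟩
    simpa [sub_eq_zero, hfb'] using (hf b' hb').symm

theorem liquidity_threshold_for_low_leverage_bank_general
    (Ai Aj : ℝ) (hAi : 0 < Ai) (hAj : 0 < Aj)
    (θbar θi θj : ℝ) (h0 : 0 < θbar) (h1 : θbar < θj) (h2 : θj < θi)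
    (si sj : ℝ) (hsi : si = Ai * (θbar - θi) / θbar) (hsj : sj = Aj * (θbar - θj) / θbar)
    (xi xj : ℝ → ℝ)
    (hxi : ∀ β : ℝ, 0 < β →
      si = xi β + (1 - Real.exp (-β * (xi β + xj β))) * Ai)
    (hxj : ∀ β : ℝ, 0 < β →
      sj = xj β + (1 - Real.exp (-β * (xi β + xj β))) * Aj) :
    ∃! βstar : ℝ, 0 < βstar ∧ xj βstar = 0 ∧
      (∀ β : ℝ, 0 < β → β < βstar → xj β < 0) ∧
      (∀ β : ℝ, βstar < β → 0 < xj β) := by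
  subst hsi hsj
  set cj := θj / θbar
  have hcj : 1 < cj := (one_lt_div h0).2 h1
  set a := Ai * (θi / θbar - cj)
  have ha : 0 < a := mul_pos hAi (sub_pos.2 (div_lt_div_of_pos_right h2 h0))
  refine existsUnique_threshold_of_sign_eq (div_pos (log_pos hcj) ha) fun β hβ => ?_
  have hxi' := liquidation_eq_of_clearing h0.ne' (hxi β hβ)
  have hxj' := liquidation_eq_of_clearing h0.ne' (hxj β hβ)
  calc SignType.sign (xj β) = SignType.sign (exp (-β * (xi β + xj β)) - cj) := by
        conv_lhs => rw [hxj', sign_mul, sign_pos hAj, one_mul]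
    _ = SignType.sign (exp (-β * -a) - cj) :=
        sign_exp_sub_eq_of_fixedPoint hβ (add_pos hAi hAj) (by linear_combination hxi' + hxj')
    _ = SignType.sign (exp (β * a) - exp (log cj)) := by rw [neg_mul_neg, exp_log (by linarith)]
    _ = SignType.sign (β * a - log cj) := exp_strictMono.sign_sub _ _
    _ = SignType.sign (β - log cj / a) := by
        rw [show β * a - log cj = (β - log cj / a) * a by field_simp, sign_mul, sign_pos ha,
          mul_one]

/-- Item 1 of Proposition 3 (Type-3 Homophily Transition): in the two-bank
zero-shock system with `θ̄ < θ_j < θ_i`, there is a unique market-liquidity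
threshold `β* > 0` at which the low-leverage bank's equilibrium liquidation
vanishes; below it the bank creates credit, above it the bank sells assets. -/
theorem liquidity_threshold_for_low_leverage_bank
    (Ai Aj : ℝ) (hAi : 0 < Ai) (hAj : 0 < Aj)
    (θbar θi θj : ℝ) (h0 : 0 < θbar) (h1 : θbar < θj) (h2 : θj < θi) (h3 : θi < 1)
    (si sj : ℝ) (hsi : si = Ai * (θbar - θi) / θbar) (hsj : sj = Aj * (θbar - θj) / θbar)
    (xi xj : ℝ → ℝ)
    (hxi : ∀ β : ℝ, 0 < β →
      si = xi β + (1 - Real.exp (-β * (xi β + xj β))) * Ai)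
    (hxj : ∀ β : ℝ, 0 < β →
      sj = xj β + (1 - Real.exp (-β * (xi β + xj β))) * Aj) :
    ∃! βstar : ℝ, 0 < βstar ∧ xj βstar = 0 ∧
      (∀ β : ℝ, 0 < β → β < βstar → xj β < 0) ∧
      (∀ β : ℝ, βstar < β → 0 < xj β) :=
  liquidity_threshold_for_low_leverage_bank_general Ai Aj hAi hAj θbar θi θj h0 h1 h2 si sj hsi hsj
    xi xj hxi hxj
end

section
/- Let A > 0 and S < 0. For each β > 0 let X(β) be the unique real solution of X + (1 − exp(−β·X))·A = S. Then X(β) < 0 for every β > 0, the function β ↦ X(β) is strictly increasing on (0, ∞), and the function β ↦ exp(−β·X(β)) is strictly increasing on (0, ∞). -/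
/-- β-monotonicity of the aggregate liquidation and of the devaluation factor
(item 2 of Lemma B.1): if `X(β)` solves `X + (1 − exp(−β·X))·A = S` with
`A > 0` and `S < 0`, then `X(β) < 0`, `β ↦ X(β)` is strictly increasing on
`(0,∞)`, and `β ↦ exp(−β·X(β))` is strictly increasing on `(0,∞)`. -/
theorem aggregate_liquidation_beta_monotone
    (A S : ℝ) (hA : 0 < A) (hS : S < 0)
    (X : ℝ → ℝ)
    (hX : ∀ β : ℝ, 0 < β → X β + (1 - Real.exp (-β * X β)) * A = S) :
    (∀ β : ℝ, 0 < β → X β < 0) ∧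
    StrictMonoOn X (Set.Ioi 0) ∧
    StrictMonoOn (fun β => Real.exp (-β * X β)) (Set.Ioi 0) := by
  have hneg : ∀ β : ℝ, 0 < β → X β < 0 := by
    intro β hβ
    by_contra h
    push_neg at h
    have h1 : -β * X β ≤ 0 := by nlinarith
    have h2 : Real.exp (-β * X β) ≤ 1 := Real.exp_le_one_iff.mpr h1
    have := hX β hβ
    nlinarith
  have hmono : StrictMonoOn X (Set.Ioi 0) := by
    intro a ha b hb hab
    simp only [Set.mem_Ioi] at ha hb
    by_contra h
    push_neg at h
    have hXa := hneg a ha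
    have h1 : -a * X a < -b * X a := by nlinarith
    have h2 : -b * X a ≤ -b * X b := by nlinarith
    have h3 : Real.exp (-a * X a) < Real.exp (-b * X b) :=
      Real.exp_lt_exp.mpr (lt_of_lt_of_le h1 h2)
    have ea := hX a ha
    have eb := hX b hb
    nlinarith
  refine ⟨hneg, hmono, ?_⟩
  intro a ha b hb hab
  simp only [Set.mem_Ioi] at ha hb
  have hXab : X a < X b := hmono ha hb hab
  have ea := hX a ha
  have eb := hX b hb
  simp only
  nlinarith
end

section
/- Fix β > 0 and a finite set P of banks with assets A_i > 0 and demands s_i ∈ ℝ. (i) If some bank has s_i < 0, then there exists a nonempty subset B ⊆ {i ∈ P : s_i < 0} such that the clustered clearing equilibrium of the subsystem on B has all components negative, and B is maximal in the sense that for every j ∈ P∖B with s_j ≤ 0, the clustered clearing equilibrium of the subsystem on B ∪ {j} has at least one nonnegative component. (ii) Symmetrically, if some bank has s_j > 0, then there exists a nonempty subset B' ⊆ {j ∈ P : s_j ≥ 0} such that the clustered equilibrium of the subsystem on B' has all components nonnegative, and for every j ∈ P∖B' with s_j ≥ 0 the clustered equilibrium of the subsystem on B' ∪ {j} has at least one negative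 component. -/
/-!
A singleton `{i}` with `s i < 0` (resp. `s i ≥ 0`) is already a bailout (resp. bail-in)
cluster: the one-bank equation `c + (1 - exp (-β c)) a = s i` has a root between `0` and
`s i` by the intermediate value theorem. Since there are finitely many sets of banks, some
cluster containing it is maximal under inclusion. Such a cluster cannot be enlarged by a
bank `j` with `s j ≤ 0` into a set whose equilibrium is negative: a negative equilibrium
makes the factor `1 - exp (-β Σ x)` nonpositive, which forces `s j < 0`, so the enlarged set
would again be a cluster.
-/

open Finset Real

section

variable {P : Type*}

def IsClusterEquilibrium (β : ℝ) (A s : P → ℝ) (B : Finset P) (x : P → ℝ) : Prop :=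
  ∀ i ∈ B, s i = x i + (1 - exp (-β * ∑ j ∈ B, x j)) * A i

/-- `q` is the sign condition: `(· < 0)` for bailout clusters, `(0 ≤ ·)` for bail-in ones. -/
def IsSignCluster (q : ℝ → Prop) (β : ℝ) (A s : P → ℝ) (B : Finset P) : Prop :=
  (∀ i ∈ B, q (s i)) ∧ ∃ x, IsClusterEquilibrium β A s B x ∧ ∀ i ∈ B, q (x i)

theorem isClusterEquilibrium_singleton_iff {β : ℝ} {A s x : P → ℝ} {i : P} :
    IsClusterEquilibrium β A s {i} x ↔ s i = x i + (1 - exp (-β * x i)) * A i := by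
  simp [IsClusterEquilibrium]

theorem exists_mem_uIcc_add_one_sub_exp_mul_eq {β a : ℝ} (hβ : 0 ≤ β) (ha : 0 ≤ a) (v : ℝ) :
    ∃ c ∈ Set.uIcc 0 v, c + (1 - exp (-β * c)) * a = v := by
  have hv : v ∈ Set.uIcc 0 (v + (1 - exp (-β * v)) * a) := by
    rcases le_total v 0 with hv | hv
    · have : 1 ≤ exp (-β * v) := one_le_exp (by nlinarith)
      exact Set.mem_uIcc.2 (Or.inr ⟨by nlinarith, hv⟩)
    · have : exp (-β * v) ≤ 1 := exp_le_one_iff.2 (by nlinarith)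
      exact Set.mem_uIcc.2 (Or.inl ⟨hv, by nlinarith⟩)
  simpa using intermediate_value_uIcc (a := 0) (b := v)
    (f := fun c => c + (1 - exp (-β * c)) * a) (by fun_prop) (by simpa using hv)

theorem isSignCluster_singleton_of_neg {β : ℝ} {A s : P → ℝ} {i : P} (hβ : 0 ≤ β)
    (hA : 0 ≤ A i) (hi : s i < 0) : IsSignCluster (· < 0) β A s {i} := by
  obtain ⟨c, hc, hfc⟩ := exists_mem_uIcc_add_one_sub_exp_mul_eq hβ hA (s i)
  rw [Set.uIcc_of_ge hi.le] at hc
  have hc0 : c ≠ 0 := by rintro rfl; simp at hfc; linarith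
  refine ⟨by simpa using hi, fun _ => c, isClusterEquilibrium_singleton_iff.2 hfc.symm, ?_⟩
  simpa using lt_of_le_of_ne hc.2 hc0

theorem isSignCluster_singleton_of_nonneg {β : ℝ} {A s : P → ℝ} {i : P} (hβ : 0 ≤ β)
    (hA : 0 ≤ A i) (hi : 0 ≤ s i) : IsSignCluster (0 ≤ ·) β A s {i} := by
  obtain ⟨c, hc, hfc⟩ := exists_mem_uIcc_add_one_sub_exp_mul_eq hβ hA (s i)
  rw [Set.uIcc_of_le hi] at hc
  exact ⟨by simpa using hi, fun _ => c, isClusterEquilibrium_singleton_iff.2 hfc.symm,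
    by simpa using hc.1⟩

theorem IsClusterEquilibrium.lt_zero_of_forall_lt_zero {β : ℝ} {A s y : P → ℝ}
    {C : Finset P} {k : P} (hy : IsClusterEquilibrium β A s C y) (hβ : 0 ≤ β) (hA : 0 ≤ A k)
    (hneg : ∀ i ∈ C, y i < 0) (hk : k ∈ C) : s k < 0 := by
  have hsum : ∑ i ∈ C, y i ≤ 0 := sum_nonpos fun i hi => (hneg i hi).le
  have hexp : 1 ≤ exp (-β * ∑ i ∈ C, y i) := one_le_exp (by nlinarith)
  have hyk := hneg k hk
  rw [hy k hk]
  nlinarith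

theorem exists_maximal_isSignCluster [Fintype P] [DecidableEq P] {q : ℝ → Prop} {β : ℝ} {A s : P → ℝ}
    {i : P} (hi : IsSignCluster q β A s {i}) :
    ∃ B : Finset P, B.Nonempty ∧ IsSignCluster q β A s B ∧
      ∀ j ∉ B, ¬ IsSignCluster q β A s (insert j B) := by
  obtain ⟨B, hiB, hmax⟩ := Finite.exists_le_maximal hi
  refine ⟨B, ⟨i, singleton_subset_iff.1 hiB⟩, hmax.prop, fun j hj hjB => hj ?_⟩
  exact insert_subset_iff.1 (hmax.le_of_ge hjB (subset_insert j B)) |>.1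

end

/-- Weak Decomposition Theorem (part 1 of Theorem 1): the maximal bailout
cluster and the maximal bail-in cluster exist. (i) If some bank has `s_i < 0`,
there is a nonempty set `B` of banks with negative demand whose subsystem
equilibrium is entirely negative and which cannot be enlarged by any remaining
bank with `s ≤ 0` while keeping all components negative. (ii) Symmetrically
for the bail-in side. -/
theorem weak_decomposition
    {P : Type*} [Fintype P] [DecidableEq P] (β : ℝ) (hβ : 0 < β)
    (A s : P → ℝ) (hA : ∀ i, 0 < A i) :
    ((∃ i, s i < 0) →
      ∃ B : Finset P, B.Nonempty ∧ (∀ i ∈ B, s i < 0) ∧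
        (∃ x : P → ℝ,
          (∀ i ∈ B, s i = x i + (1 - Real.exp (-β * ∑ j ∈ B, x j)) * A i) ∧
          (∀ i ∈ B, x i < 0)) ∧
        (∀ j ∉ B, s j ≤ 0 →
          ∀ y : P → ℝ,
            (∀ i ∈ insert j B,
              s i = y i + (1 - Real.exp (-β * ∑ k ∈ insert j B, y k)) * A i) →
            ∃ i ∈ insert j B, 0 ≤ y i)) ∧
    ((∃ j, 0 < s j) →
      ∃ B' : Finset P, B'.Nonempty ∧ (∀ j ∈ B', 0 ≤ s j) ∧
        (∃ x : P → ℝ,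
          (∀ i ∈ B', s i = x i + (1 - Real.exp (-β * ∑ j ∈ B', x j)) * A i) ∧
          (∀ i ∈ B', 0 ≤ x i)) ∧
        (∀ j ∉ B', 0 ≤ s j →
          ∀ y : P → ℝ,
            (∀ i ∈ insert j B',
              s i = y i + (1 - Real.exp (-β * ∑ k ∈ insert j B', y k)) * A i) →
            ∃ i ∈ insert j B', y i < 0)) := by
  refine ⟨fun ⟨i, hi⟩ => ?_, fun ⟨i, hi⟩ => ?_⟩
  · obtain ⟨B, hBne, hB, hmax⟩ :=
      exists_maximal_isSignCluster (isSignCluster_singleton_of_neg hβ.le (hA i).le hi)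
    refine ⟨B, hBne, hB.1, hB.2, fun j hj _ y hy => ?_⟩
    by_contra! hneg
    have hsj : s j < 0 := IsClusterEquilibrium.lt_zero_of_forall_lt_zero hy hβ.le (hA j).le hneg (mem_insert_self j B)
    exact hmax j hj ⟨(forall_mem_insert _ _ _).2 ⟨hsj, hB.1⟩, y, hy, hneg⟩
  · obtain ⟨B, hBne, hB, hmax⟩ :=
      exists_maximal_isSignCluster (isSignCluster_singleton_of_nonneg hβ.le (hA i).le hi.le)
    refine ⟨B, hBne, hB.1, hB.2, fun j hj hsj y hy => ?_⟩
    by_contra! hnonneg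
    exact hmax j hj ⟨(forall_mem_insert _ _ _).2 ⟨hsj, hB.1⟩, y, hy, hnonneg⟩
end
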